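/- Let E be a real inner product space, f : E → ℝ an L-smooth function with L > 0, and let θ, v ∈ E, C ≥ 1, δ ≥ 0, Σ² ≥ 0, η > 0 satisfy: (i) ⟨∇f(θ), v⟩ ≥ (1/2)·‖∇f(θ)‖² − (1/2)·δ; (ii) ‖v‖² ≤ C·‖∇f(θ)‖² + Σ²; (iii) η ≤ 1/(2·L·C). Then ‖∇f(θ)‖² ≤ (4/η)·(f(θ) − f(θ − η·v)) + 2·δ + 2·L·η·Σ². -/

import Mathlib

open RealInnerProductSpace

lemma descent_lemma
    {E : Type*} [NormedAddCommGroup E] [InnerProductSpace ℝ E] [CompleteSpace E]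
    (f : E → ℝ) (L : ℝ) (hL : 0 ≤ L) (hf : Differentiable ℝ f)
    (hlip : ∀ x y : E, ‖gradient f x - gradient f y‖ ≤ L * ‖x - y‖)
    (x y : E) :
    f y ≤ f x + ⟪gradient f x, y - x⟫ + L / 2 * ‖y - x‖ ^ 2 := by
  set u := y - x with hu
  set g : ℝ → ℝ := fun t => f (x + t • u) - t * ⟪gradient f x, u⟫ - L / 2 * t ^ 2 * ‖u‖ ^ 2
    with hg
  have hderiv : ∀ t : ℝ, HasDerivAt g
      (⟪gradient f (x + t • u), u⟫ - ⟪gradient f x, u⟫ - L * t * ‖u‖ ^ 2) t := by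
    intro t
    have hc : HasDerivAt (fun t : ℝ => x + t • u) u t := by
      simpa using ((hasDerivAt_id t).smul_const u).const_add x
    have hF : HasFDerivAt f (InnerProductSpace.toDual ℝ E (gradient f (x + t • u)))
        (x + t • u) := by
      rw [← hasGradientAt_iff_hasFDerivAt]
      exact (hf _).hasGradientAt
    have h1 : HasDerivAt (fun t : ℝ => f (x + t • u)) ⟪gradient f (x + t • u), u⟫ t := by
      simpa [InnerProductSpace.toDual_apply_apply, Function.comp_def] using hF.comp_hasDerivAt t hc
    have h2 : HasDerivAt (fun t : ℝ => t * ⟪gradient f x, u⟫) ⟪gradient f x, u⟫ t := by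
      simpa using (hasDerivAt_id t).mul_const (⟪gradient f x, u⟫ : ℝ)
    have h3 : HasDerivAt (fun t : ℝ => L / 2 * t ^ 2 * ‖u‖ ^ 2) (L * t * ‖u‖ ^ 2) t := by
      have := ((hasDerivAt_pow 2 t).const_mul (L / 2)).mul_const (‖u‖ ^ 2)
      exact this.congr_deriv (by ring)
    exact (h1.sub h2).sub h3
  have hanti : AntitoneOn g (Set.Icc (0 : ℝ) 1) := by
    apply antitoneOn_of_deriv_nonpos (convex_Icc 0 1)
    · exact fun t _ => ((hderiv t).differentiableAt).continuousAt.continuousWithinAt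
    · intro t ht
      exact ((hderiv t).differentiableAt).differentiableWithinAt
    · intro t ht
      rw [interior_Icc] at ht
      rw [(hderiv t).deriv]
      have hcs : ⟪gradient f (x + t • u) - gradient f x, u⟫ ≤
          ‖gradient f (x + t • u) - gradient f x‖ * ‖u‖ :=
        real_inner_le_norm _ _
      have hlb : ‖gradient f (x + t • u) - gradient f x‖ ≤ L * (t * ‖u‖) := by
        have := hlip (x + t • u) x
        simpa [norm_smul, abs_of_nonneg ht.1.le, mul_assoc] using this
      have hinner : ⟪gradient f (x + t • u) - gradient f x, u⟫ =
          ⟪gradient f (x + t • u), u⟫ - ⟪gradient f x, u⟫ := by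
        rw [inner_sub_left]
      nlinarith [norm_nonneg u, mul_le_mul_of_nonneg_right hlb (norm_nonneg u)]
  have h01 := hanti (Set.left_mem_Icc.2 zero_le_one) (Set.right_mem_Icc.2 zero_le_one)
      zero_le_one
  simp only [hg] at h01
  have hxy : x + (1 : ℝ) • u = y := by simp [hu]
  rw [hxy] at h01
  simp at h01
  have hgu : ⟪gradient f x, u⟫ = (fderiv ℝ f x) u := by simp
  linarith

/-- Rearranged per-iteration bound: for `L`-smooth `f` (`L > 0`), if
(i) `⟪∇f θ, v⟫ ≥ (1/2)‖∇f θ‖² - (1/2)δ`, (ii) `‖v‖² ≤ C‖∇f θ‖² + Σ²`, and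
(iii) `η ≤ 1/(2LC)` with `C ≥ 1`, `δ ≥ 0`, `Σ² ≥ 0`, `η > 0`, then
`‖∇f θ‖² ≤ (4/η)(f θ - f(θ - η • v)) + 2δ + 2 L η Σ²`. -/
theorem per_iteration_gradient_bound
    {E : Type*} [NormedAddCommGroup E] [InnerProductSpace ℝ E] [CompleteSpace E]
    (f : E → ℝ) (L : ℝ) (hL : 0 < L) (hf : Differentiable ℝ f)
    (hlip : ∀ x y : E, ‖gradient f x - gradient f y‖ ≤ L * ‖x - y‖)
    (θ v : E) (C δ σ2 η : ℝ)
    (hC : 1 ≤ C) (hδ : 0 ≤ δ) (hσ : 0 ≤ σ2) (hη : 0 < η)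
    (h1 : ⟪gradient f θ, v⟫ ≥ 1 / 2 * ‖gradient f θ‖ ^ 2 - 1 / 2 * δ)
    (h2 : ‖v‖ ^ 2 ≤ C * ‖gradient f θ‖ ^ 2 + σ2)
    (h3 : η ≤ 1 / (2 * L * C)) :
    ‖gradient f θ‖ ^ 2 ≤
      4 / η * (f θ - f (θ - η • v)) + 2 * δ + 2 * L * η * σ2 := by
  have hdes := descent_lemma f L hL.le hf hlip θ (θ - η • v)
  have hsub : θ - η • v - θ = -(η • v) := by abel
  rw [hsub] at hdes
  have hi : ⟪gradient f θ, -(η • v)⟫ = -(η * ⟪gradient f θ, v⟫) := by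
    rw [inner_neg_right, real_inner_smul_right]
  have hn : ‖-(η • v)‖ ^ 2 = η ^ 2 * ‖v‖ ^ 2 := by
    rw [norm_neg, norm_smul]
    simp [abs_of_nonneg hη.le, mul_pow]
  rw [hi, hn] at hdes
  -- key: f θ - f (θ - η • v) ≥ η⟪g,v⟫ - L/2 η² ‖v‖²
  have hLC : L * C * η ≤ 1 / 2 := by
    rw [le_div_iff₀ (by positivity : (0:ℝ) < 2 * L * C)] at h3
    nlinarith
  have hC0 : (0:ℝ) < C := lt_of_lt_of_le one_pos hC
  have hg2 : (0:ℝ) ≤ ‖gradient f θ‖ ^ 2 := sq_nonneg _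
  have hkey : η * ‖gradient f θ‖ ^ 2 ≤
      4 * (f θ - f (θ - η • v)) + 2 * δ * η + 2 * L * η ^ 2 * σ2 := by
    nlinarith [mul_le_mul_of_nonneg_left h2 (mul_nonneg hL.le (sq_nonneg η)),
      mul_le_mul_of_nonneg_right h1.le hη.le, mul_le_mul_of_nonneg_right hLC hg2,
      sq_nonneg η, hη.le]
  have : ‖gradient f θ‖ ^ 2 ≤ (4 * (f θ - f (θ - η • v)) + 2 * δ * η + 2 * L * η ^ 2 * σ2) / η :=
    (le_div_iff₀' hη).2 hkey
  calc ‖gradient f θ‖ ^ 2 ≤ _ := this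
    _ = 4 / η * (f θ - f (θ - η • v)) + 2 * δ + 2 * L * η * σ2 := by
        field_simp
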